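/- Let X be a discrete random variable with support of size n and let ε ≥ 0. Among all random variables X' satisfying d_K(X,X') ≤ ε and F_X(t) ≤ F_{X'}(t) for all t, there exists one with minimal support size whose support is contained in the support of X. -/
import Mathlib


open scoped Classical

/-- A finitely supported discrete random variable on ℝ, given by its
probability mass function. -/
structure DRV where
  f : ℝ →₀ ℝ
  nonneg : ∀ x, 0 ≤ f x
  sum_one : f.sum (fun _ p => p) = 1

/-- The cumulative distribution function `F_X(t) = Pr(X ≤ t)`. -/
noncomputable def DRV.cdf (X : DRV) (t : ℝ) : ℝ :=
  ∑ x ∈ X.f.support.filter (· ≤ t), X.f x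

/-- The Kolmogorov distance `d_K(X,X') = sup_t |F_X(t) - F_{X'}(t)|`. -/
noncomputable def dK (X Y : DRV) : ℝ := ⨆ t : ℝ, |X.cdf t - Y.cdf t|

/-- The size of the support of a random variable. -/
def DRV.suppSize (X : DRV) : ℕ := X.f.support.card

/- ### Auxiliary lemmas -/

lemma DRV.cdf_nonneg (X : DRV) (t : ℝ) : 0 ≤ X.cdf t :=
  Finset.sum_nonneg fun x _ => X.nonneg x

lemma DRV.cdf_le_one (X : DRV) (t : ℝ) : X.cdf t ≤ 1 := by
  have h : X.cdf t ≤ ∑ x ∈ X.f.support, X.f x :=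
    Finset.sum_le_sum_of_subset_of_nonneg (Finset.filter_subset _ _)
      (fun x _ _ => X.nonneg x)
  simpa [Finsupp.sum] using h.trans_eq X.sum_one

lemma abs_cdf_sub_le (X Y : DRV) (t : ℝ) : |X.cdf t - Y.cdf t| ≤ 2 := by
  have h1 := X.cdf_nonneg t; have h2 := X.cdf_le_one t
  have h3 := Y.cdf_nonneg t; have h4 := Y.cdf_le_one t
  rw [abs_sub_le_iff]; constructor <;> linarith

lemma dK_self (X : DRV) : dK X X = 0 := by
  simp [dK, sub_self, abs_zero, ciSup_const]

lemma abs_le_dK (X Y : DRV) (t : ℝ) : |X.cdf t - Y.cdf t| ≤ dK X Y :=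
  le_ciSup (f := fun t => |X.cdf t - Y.cdf t|)
    ⟨2, by rintro _ ⟨t, rfl⟩; exact abs_cdf_sub_le X Y t⟩ t

lemma dK_le (X Y : DRV) {c : ℝ} (hc : 0 ≤ c)
    (h : ∀ t, |X.cdf t - Y.cdf t| ≤ c) : dK X Y ≤ c :=
  Real.iSup_le h hc

lemma DRV.cdf_eq_sum (X : DRV) (t : ℝ) :
    X.cdf t = X.f.sum (fun x c => if x ≤ t then c else 0) := by
  rw [DRV.cdf, Finsupp.sum, Finset.sum_filter]

/-- Among all one-sided `ε`-approximations of `X` (i.e. `F_X ≤ F_{X'}` pointwise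
and `d_K(X,X') ≤ ε`), there is one of minimal support size whose support is
contained in the support of `X`. -/
theorem exists_minimal_onesided_approx_subset_support
    (X : DRV) (ε : ℝ) (hε : 0 ≤ ε) :
    ∃ X' : DRV, (∀ t, X.cdf t ≤ X'.cdf t) ∧ dK X X' ≤ ε ∧
      X'.f.support ⊆ X.f.support ∧
      (∀ Y : DRV, (∀ t, X.cdf t ≤ Y.cdf t) → dK X Y ≤ ε →
        X'.suppSize ≤ Y.suppSize) := by
  classical
  -- the support of X is nonempty
  have hne : X.f.support.Nonempty := by
    rw [Finset.nonempty_iff_ne_empty]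
    intro h
    have : X.f.sum (fun _ p => p) = 0 := by
      rw [Finsupp.sum, h, Finset.sum_empty]
    rw [X.sum_one] at this; norm_num at this
  -- candidates
  set S : Set ℕ :=
    {n | ∃ Y : DRV, (∀ t, X.cdf t ≤ Y.cdf t) ∧ dK X Y ≤ ε ∧ Y.suppSize = n} with hS
  have hXS : X.suppSize ∈ S :=
    ⟨X, fun t => le_refl _, by rw [dK_self]; exact hε, rfl⟩
  obtain ⟨Y, hY1, hY2, hYn⟩ : sInf S ∈ S := Nat.sInf_mem ⟨_, hXS⟩
  -- the pushing map
  set g : ℝ → ℝ := fun y =>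
    if h : (X.f.support.filter (fun x => y ≤ x)).Nonempty
    then (X.f.support.filter (fun x => y ≤ x)).min' h
    else X.f.support.max' hne with hg
  have hg_mem : ∀ y, g y ∈ X.f.support := by
    intro y
    rw [hg]; dsimp only
    split
    · next h => exact Finset.mem_of_mem_filter _ (Finset.min'_mem _ h)
    · exact Finset.max'_mem _ hne
  have hg_le : ∀ y x, x ∈ X.f.support → y ≤ x → g y ≤ x := by
    intro y x hx hyx
    have hmem : x ∈ X.f.support.filter (fun x => y ≤ x) :=
      Finset.mem_filter.2 ⟨hx, hyx⟩
    rw [hg]; dsimp only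
    rw [dif_pos ⟨x, hmem⟩]
    exact Finset.min'_le _ _ hmem
  have hg_ge : ∀ y, (∃ x ∈ X.f.support, y ≤ x) → y ≤ g y := by
    rintro y ⟨x, hx, hyx⟩
    have hmem : x ∈ X.f.support.filter (fun x => y ≤ x) :=
      Finset.mem_filter.2 ⟨hx, hyx⟩
    rw [hg]; dsimp only
    rw [dif_pos ⟨x, hmem⟩]
    exact (Finset.mem_filter.1 (Finset.min'_mem _ ⟨x, hmem⟩)).2
  -- no mass of Y above the top of supp X
  have hY_top : ∀ y ∈ Y.f.support, ∃ x ∈ X.f.support, y ≤ x := by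
    intro y hy
    by_contra hcon
    push_neg at hcon
    set M := X.f.support.max' hne with hM
    have hMlt : M < y := hcon M (Finset.max'_mem _ hne)
    -- F_X M = 1
    have hXM : X.cdf M = 1 := by
      rw [DRV.cdf]
      have : X.f.support.filter (· ≤ M) = X.f.support :=
        Finset.filter_true_of_mem fun x hx => Finset.le_max' _ _ hx
      rw [this]
      simpa [Finsupp.sum] using X.sum_one
    -- F_Y M ≤ 1 - Y.f y
    have hy0 : 0 < Y.f y := lt_of_le_of_ne (Y.nonneg y)
      (Ne.symm (Finsupp.mem_support_iff.1 hy))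
    have hYM : Y.cdf M ≤ 1 - Y.f y := by
      have hsub : Y.f.support.filter (· ≤ M) ⊆ Y.f.support.erase y := by
        intro z hz
        rcases Finset.mem_filter.1 hz with ⟨hz1, hz2⟩
        exact Finset.mem_erase.2 ⟨by rintro rfl; exact absurd hz2 (not_le.2 hMlt), hz1⟩
      have h1 : Y.cdf M ≤ ∑ z ∈ Y.f.support.erase y, Y.f z :=
        Finset.sum_le_sum_of_subset_of_nonneg hsub (fun z _ _ => Y.nonneg z)
      have h2 : ∑ z ∈ Y.f.support.erase y, Y.f z = 1 - Y.f y := by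
        have := Finset.add_sum_erase _ Y.f hy
        have htot : ∑ z ∈ Y.f.support, Y.f z = 1 := by
          simpa [Finsupp.sum] using Y.sum_one
        linarith
      linarith
    have := hY1 M
    linarith
  -- the new random variable
  have hmd_nonneg : ∀ x, 0 ≤ Finsupp.mapDomain g Y.f x := by
    intro x
    rw [Finsupp.mapDomain, Finsupp.sum_apply]
    refine Finset.sum_nonneg fun y _ => ?_
    dsimp only
    rw [Finsupp.single_apply]
    split <;> [exact Y.nonneg y; exact le_refl _]
  have hmd_sum : (Finsupp.mapDomain g Y.f).sum (fun _ p => p) = 1 := by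
    rw [Finsupp.sum_mapDomain_index (fun _ => rfl) (fun _ _ _ => rfl)]
    exact Y.sum_one
  set X' : DRV := ⟨Finsupp.mapDomain g Y.f, hmd_nonneg, hmd_sum⟩ with hX'
  -- cdf of X'
  have hcdf' : ∀ t, X'.cdf t =
      ∑ y ∈ Y.f.support.filter (fun y => g y ≤ t), Y.f y := by
    intro t
    rw [DRV.cdf_eq_sum, hX']
    dsimp only
    rw [Finsupp.sum_mapDomain_index (fun a => by split <;> rfl)
      (fun a b₁ b₂ => by split <;> simp)]
    rw [Finsupp.sum, Finset.sum_filter]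
  -- support of X'
  have hsupp' : X'.f.support ⊆ X.f.support := by
    intro x hx
    have := Finsupp.mapDomain_support hx
    rcases Finset.mem_image.1 this with ⟨y, _, rfl⟩
    exact hg_mem y
  -- F_X ≤ F_X'
  have hle1 : ∀ t, X.cdf t ≤ X'.cdf t := by
    intro t
    rw [hcdf']
    by_cases hft : (X.f.support.filter (· ≤ t)).Nonempty
    · obtain ⟨s, hsmem, hsmax⟩ :
          ∃ s ∈ X.f.support.filter (· ≤ t), ∀ x ∈ X.f.support.filter (· ≤ t), x ≤ s :=
        ⟨_, Finset.max'_mem _ hft, fun x hx => Finset.le_max' _ x hx⟩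
      rcases Finset.mem_filter.1 hsmem with ⟨hsX, hst⟩
      have hXeq : X.cdf t = X.cdf s := by
        rw [DRV.cdf, DRV.cdf]
        congr 1
        ext x
        simp only [Finset.mem_filter]
        constructor
        · rintro ⟨hx1, hx2⟩
          exact ⟨hx1, hsmax x (Finset.mem_filter.2 ⟨hx1, hx2⟩)⟩
        · rintro ⟨hx1, hx2⟩
          exact ⟨hx1, le_trans hx2 hst⟩
      have hYs : Y.cdf s ≤ ∑ y ∈ Y.f.support.filter (fun y => g y ≤ t), Y.f y := by
        rw [DRV.cdf]
        refine Finset.sum_le_sum_of_subset_of_nonneg ?_ (fun y _ _ => Y.nonneg y)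
        intro y hy
        rcases Finset.mem_filter.1 hy with ⟨hy1, hy2⟩
        exact Finset.mem_filter.2 ⟨hy1, le_trans (hg_le y s hsX hy2) hst⟩
      calc X.cdf t = X.cdf s := hXeq
        _ ≤ Y.cdf s := hY1 s
        _ ≤ _ := hYs
    · have : X.cdf t = 0 := by
        rw [DRV.cdf, Finset.not_nonempty_iff_eq_empty.1 hft, Finset.sum_empty]
      rw [this]
      exact Finset.sum_nonneg fun y _ => Y.nonneg y
  -- F_X' ≤ F_Y
  have hle2 : ∀ t, X'.cdf t ≤ Y.cdf t := by
    intro t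
    rw [hcdf', DRV.cdf]
    refine Finset.sum_le_sum_of_subset_of_nonneg ?_ (fun y _ _ => Y.nonneg y)
    intro y hy
    rcases Finset.mem_filter.1 hy with ⟨hy1, hy2⟩
    exact Finset.mem_filter.2 ⟨hy1, le_trans (hg_ge y (hY_top y hy1)) hy2⟩
  -- dK bound
  have hdk : dK X X' ≤ ε := by
    refine dK_le X X' hε fun t => ?_
    have h1 := hle1 t
    have h2 := hle2 t
    have h3 : |X.cdf t - Y.cdf t| ≤ ε := (abs_le_dK X Y t).trans hY2
    rw [abs_sub_le_iff] at h3 ⊢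
    constructor <;> [linarith [h3.1]; linarith [h3.2]]
  -- support size
  have hcard : X'.suppSize ≤ sInf S := by
    rw [← hYn]
    calc X'.suppSize ≤ (Y.f.support.image g).card :=
          Finset.card_le_card Finsupp.mapDomain_support
      _ ≤ Y.f.support.card := Finset.card_image_le
      _ = Y.suppSize := rfl
  refine ⟨X', hle1, hdk, hsupp', fun Z hZ1 hZ2 => ?_⟩
  exact hcard.trans (Nat.sInf_le ⟨Z, hZ1, hZ2, rfl⟩)
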